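/- Let V be a real inner product space, let ξ₁, ξ₂ ∈ V be orthonormal unit vectors, let η₁, η₂ be the dual 1-forms η_α(X) = ⟨X, ξ_α⟩, and let f : V → V be a linear map with f ξ₁ = 0 and f ξ₂ = 0. Suppose R : V × V × V → V is a trilinear map which for some real constants F₁, …, F₈ satisfies, for all X, Y, Z ∈ V, the generalized S-space-form curvature identity R(X,Y)Z = F₁{⟨Y,Z⟩X − ⟨X,Z⟩Y} + F₂{⟨X,fZ⟩fY − ⟨Y,fZ⟩fX + 2⟨X,fY⟩fZ} + F₃{η₁(X)η₁(Z)Y − η₁(Y)η₁(Z)X + ⟨X,Z⟩η₁(Y)ξ₁ − ⟨Y,Z⟩η₁(X)ξ₁} + F₄{η₂(X)η₂(Z)Y − η₂(Y)η₂(Z)X + ⟨X,Z⟩η₂(Y)ξ₂ − ⟨Y,Z⟩η₂(X)ξ₂} + F₅{η₁(X)η₂(Z)Y − η₁(Y)η₂(Z)X + ⟨X,Z⟩η₁(Y)ξ₂ − ⟨Y,Z⟩η₁(X)ξ₂} + F₆{η₂(X)η₁(Z)Y − η₂(Y)η₁(Z)X + ⟨X,Z⟩η₂(Y)ξ₁ −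 ⟨Y,Z⟩η₂(X)ξ₁} + F₇{η₁(X)η₂(Y)η₂(Z)ξ₁ − η₂(X)η₁(Y)η₂(Z)ξ₁} + F₈{η₂(X)η₁(Y)η₁(Z)ξ₂ − η₁(X)η₂(Y)η₁(Z)ξ₂}. Suppose moreover that R satisfies the standard skew-symmetry of a Riemannian curvature tensor: ⟨R(X,Y)Z, W⟩ = −⟨R(X,Y)W, Z⟩ for all X, Y, Z, W ∈ V. Then F₇ = F₈. -/

import Mathlib

open scoped RealInnerProductSpace

/-!
Evaluate the skew-symmetry `⟪R(X,Y)Z, W⟫ = -⟪R(X,Y)W, Z⟫` at `(X, Y, Z, W) = (ξ₁, ξ₂, ξ₂, ξ₁)`.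
Since `f` kills both structure vectors, `R(ξ₁,ξ₂)ξ₂ = (F₁ - F₃ - F₄ + F₇) ξ₁` and
`R(ξ₁,ξ₂)ξ₁ = (F₃ + F₄ - F₁ - F₈) ξ₂`, so the identity reads
`F₁ - F₃ - F₄ + F₇ = F₁ - F₃ - F₄ + F₈`.
-/

section

variable {V : Type*} [NormedAddCommGroup V] [InnerProductSpace ℝ V]

def sSpaceFormCurvature (ξ₁ ξ₂ : V) (f : V →ₗ[ℝ] V) (F₁ F₂ F₃ F₄ F₅ F₆ F₇ F₈ : ℝ)
    (X Y Z : V) : V :=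
  F₁ • (⟪Y, Z⟫ • X - ⟪X, Z⟫ • Y)
  + F₂ • (⟪X, f Z⟫ • f Y - ⟪Y, f Z⟫ • f X + (2 * ⟪X, f Y⟫) • f Z)
  + F₃ • ((⟪X, ξ₁⟫ * ⟪Z, ξ₁⟫) • Y - (⟪Y, ξ₁⟫ * ⟪Z, ξ₁⟫) • X
          + (⟪X, Z⟫ * ⟪Y, ξ₁⟫) • ξ₁ - (⟪Y, Z⟫ * ⟪X, ξ₁⟫) • ξ₁)
  + F₄ • ((⟪X, ξ₂⟫ * ⟪Z, ξ₂⟫) • Y - (⟪Y, ξ₂⟫ * ⟪Z, ξ₂⟫) • X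
          + (⟪X, Z⟫ * ⟪Y, ξ₂⟫) • ξ₂ - (⟪Y, Z⟫ * ⟪X, ξ₂⟫) • ξ₂)
  + F₅ • ((⟪X, ξ₁⟫ * ⟪Z, ξ₂⟫) • Y - (⟪Y, ξ₁⟫ * ⟪Z, ξ₂⟫) • X
          + (⟪X, Z⟫ * ⟪Y, ξ₁⟫) • ξ₂ - (⟪Y, Z⟫ * ⟪X, ξ₁⟫) • ξ₂)
  + F₆ • ((⟪X, ξ₂⟫ * ⟪Z, ξ₁⟫) • Y - (⟪Y, ξ₂⟫ * ⟪Z, ξ₁⟫) • X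
          + (⟪X, Z⟫ * ⟪Y, ξ₂⟫) • ξ₁ - (⟪Y, Z⟫ * ⟪X, ξ₂⟫) • ξ₁)
  + F₇ • ((⟪X, ξ₁⟫ * ⟪Y, ξ₂⟫ * ⟪Z, ξ₂⟫) • ξ₁ - (⟪X, ξ₂⟫ * ⟪Y, ξ₁⟫ * ⟪Z, ξ₂⟫) • ξ₁)
  + F₈ • ((⟪X, ξ₂⟫ * ⟪Y, ξ₁⟫ * ⟪Z, ξ₁⟫) • ξ₂ - (⟪X, ξ₁⟫ * ⟪Y, ξ₂⟫ * ⟪Z, ξ₁⟫) • ξ₂)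

section Orthonormal

variable {ξ₁ ξ₂ : V} {f : V →ₗ[ℝ] V}
  (h₁₁ : ⟪ξ₁, ξ₁⟫ = 1) (h₂₂ : ⟪ξ₂, ξ₂⟫ = 1) (h₁₂ : ⟪ξ₁, ξ₂⟫ = 0)
  (hf₁ : f ξ₁ = 0) (hf₂ : f ξ₂ = 0)
include h₁₁ h₂₂ h₁₂ hf₁ hf₂

theorem sSpaceFormCurvature_xi₁_xi₂_xi₂ (F₁ F₂ F₃ F₄ F₅ F₆ F₇ F₈ : ℝ) :
    sSpaceFormCurvature ξ₁ ξ₂ f F₁ F₂ F₃ F₄ F₅ F₆ F₇ F₈ ξ₁ ξ₂ ξ₂ =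
      (F₁ - F₃ - F₄ + F₇) • ξ₁ := by
  have h₂₁ : ⟪ξ₂, ξ₁⟫ = 0 := by rw [real_inner_comm, h₁₂]
  simp only [sSpaceFormCurvature, hf₁, hf₂, h₁₁, h₂₂, h₁₂, h₂₁, inner_zero_right,
    smul_zero]
  module

theorem sSpaceFormCurvature_xi₁_xi₂_xi₁ (F₁ F₂ F₃ F₄ F₅ F₆ F₇ F₈ : ℝ) :
    sSpaceFormCurvature ξ₁ ξ₂ f F₁ F₂ F₃ F₄ F₅ F₆ F₇ F₈ ξ₁ ξ₂ ξ₁ =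
      (F₃ + F₄ - F₁ - F₈) • ξ₂ := by
  have h₂₁ : ⟪ξ₂, ξ₁⟫ = 0 := by rw [real_inner_comm, h₁₂]
  simp only [sSpaceFormCurvature, hf₁, hf₂, h₁₁, h₂₂, h₁₂, h₂₁, inner_zero_right,
    smul_zero]
  module

end Orthonormal

end

/-- In a generalized S-space-form, F₇ = F₈ (pointwise linear-algebraic form). -/
theorem generalized_S_space_form_F7_eq_F8
    {V : Type*} [NormedAddCommGroup V] [InnerProductSpace ℝ V]
    (ξ₁ ξ₂ : V) (hn₁ : ‖ξ₁‖ = 1) (hn₂ : ‖ξ₂‖ = 1) (horth : ⟪ξ₁, ξ₂⟫ = 0)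
    (η₁ η₂ : V → ℝ) (hη₁ : ∀ X, η₁ X = ⟪X, ξ₁⟫) (hη₂ : ∀ X, η₂ X = ⟪X, ξ₂⟫)
    (f : V →ₗ[ℝ] V) (hf₁ : f ξ₁ = 0) (hf₂ : f ξ₂ = 0)
    (R : V →ₗ[ℝ] V →ₗ[ℝ] V →ₗ[ℝ] V)
    (F₁ F₂ F₃ F₄ F₅ F₆ F₇ F₈ : ℝ)
    (hR : ∀ X Y Z : V, R X Y Z =
      F₁ • (⟪Y, Z⟫ • X - ⟪X, Z⟫ • Y)
      + F₂ • (⟪X, f Z⟫ • f Y - ⟪Y, f Z⟫ • f X + (2 * ⟪X, f Y⟫) • f Z)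
      + F₃ • ((η₁ X * η₁ Z) • Y - (η₁ Y * η₁ Z) • X
              + (⟪X, Z⟫ * η₁ Y) • ξ₁ - (⟪Y, Z⟫ * η₁ X) • ξ₁)
      + F₄ • ((η₂ X * η₂ Z) • Y - (η₂ Y * η₂ Z) • X
              + (⟪X, Z⟫ * η₂ Y) • ξ₂ - (⟪Y, Z⟫ * η₂ X) • ξ₂)
      + F₅ • ((η₁ X * η₂ Z) • Y - (η₁ Y * η₂ Z) • X
              + (⟪X, Z⟫ * η₁ Y) • ξ₂ - (⟪Y, Z⟫ * η₁ X) • ξ₂)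
      + F₆ • ((η₂ X * η₁ Z) • Y - (η₂ Y * η₁ Z) • X
              + (⟪X, Z⟫ * η₂ Y) • ξ₁ - (⟪Y, Z⟫ * η₂ X) • ξ₁)
      + F₇ • ((η₁ X * η₂ Y * η₂ Z) • ξ₁ - (η₂ X * η₁ Y * η₂ Z) • ξ₁)
      + F₈ • ((η₂ X * η₁ Y * η₁ Z) • ξ₂ - (η₁ X * η₂ Y * η₁ Z) • ξ₂))
    (hskew : ∀ X Y Z W : V, ⟪R X Y Z, W⟫ = -⟪R X Y W, Z⟫) :
    F₇ = F₈ := by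
  have h₁₁ : ⟪ξ₁, ξ₁⟫ = 1 := by rw [real_inner_self_eq_norm_sq, hn₁, one_pow]
  have h₂₂ : ⟪ξ₂, ξ₂⟫ = 1 := by rw [real_inner_self_eq_norm_sq, hn₂, one_pow]
  have hRc : ∀ X Y Z, R X Y Z = sSpaceFormCurvature ξ₁ ξ₂ f F₁ F₂ F₃ F₄ F₅ F₆ F₇ F₈ X Y Z :=
    fun X Y Z => by simp only [hR, hη₁, hη₂, sSpaceFormCurvature]
  have h := hskew ξ₁ ξ₂ ξ₂ ξ₁
  rw [hRc, hRc, sSpaceFormCurvature_xi₁_xi₂_xi₂ h₁₁ h₂₂ horth hf₁ hf₂,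
    sSpaceFormCurvature_xi₁_xi₂_xi₁ h₁₁ h₂₂ horth hf₁ hf₂,
    real_inner_smul_left, real_inner_smul_left, h₁₁, h₂₂] at h
  linarith
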